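/- Let n ≥ 2, let r_j : ℝⁿ → ℝ for j = 1,…,n be payoff functions, and suppose there exist ε₁ ≥ 0 and a function f : ℝⁿ → ℝ that is indistinguishable (invariant under every permutation of its n arguments) and twice continuously differentiable on an open set containing the closed Euclidean ball B̄(c^⊗n, R) (c ∈ ℝ, R > 0), such that |r_j(a) − f(a)| ≤ ε₁ for every a ∈ B̄(c^⊗n, R) and every j. Then there exists δ > 0 such that for every j and every a ∈ B̄(c^⊗n, R), writing m̄ = (1/n) Σ_{i=1}^n a_i and r̄(x) = f(x,…,x), one has |r_j(a) − r̄(m̄)| ≤ ε₁ + δ · ‖a − m̄^⊗n‖². -/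

import Mathlib

/-! Since `f` is symmetric, its derivative at a diagonal point `m̄^⊗n` is invariant under
permutations of the coordinates, hence a multiple of `v ↦ ∑ vᵢ`, and so vanishes on
`a - m̄^⊗n`. Thus `f a - f (m̄^⊗n)` is a pure second-order Taylor remainder, bounded by
`sup ‖D²f‖ · ‖a - m̄^⊗n‖²` on the ball, which is compact, convex and (by Pythagoras) contains
`m̄^⊗n`. The triangle inequality with `|r_j - f| ≤ ε₁` concludes. -/

open Finset

section Taylor

variable {E F : Type*} [NormedAddCommGroup E] [NormedSpace ℝ E] [NormedAddCommGroup F]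
  [NormedSpace ℝ F] {f : E → F} {s K : Set E}

theorem Convex.norm_sub_sub_fderiv_le_of_norm_fderiv_fderiv_le (hs : IsOpen s)
    (hf : ContDiffOn ℝ 2 f s) (hK : Convex ℝ K) (hKs : K ⊆ s) {M : ℝ}
    (hM : ∀ x ∈ K, ‖fderiv ℝ (fderiv ℝ f) x‖ ≤ M) {a b : E} (ha : a ∈ K) (hb : b ∈ K) :
    ‖f a - f b - fderiv ℝ f b (a - b)‖ ≤ M * ‖a - b‖ ^ 2 := by
  have hM₀ : 0 ≤ M := (norm_nonneg (fderiv ℝ (fderiv ℝ f) b)).trans (hM b hb)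
  have hdiff : ∀ x ∈ s, DifferentiableAt ℝ f x := fun x hx =>
    (hf.differentiableOn (by norm_num)).differentiableAt (hs.mem_nhds hx)
  have hdiff_fderiv : ∀ x ∈ s, DifferentiableAt ℝ (fderiv ℝ f) x := fun x hx =>
    ((hf.fderiv_of_isOpen hs (by norm_num : (1 : WithTop ℕ∞) + 1 ≤ 2)).differentiableOn
      one_ne_zero).differentiableAt (hs.mem_nhds hx)
  have hseg : segment ℝ b a ⊆ K := hK.segment_subset hb ha
  have hbound : ∀ x ∈ segment ℝ b a, ‖fderiv ℝ f x - fderiv ℝ f b‖ ≤ M * ‖a - b‖ := by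
    intro x hx
    calc ‖fderiv ℝ f x - fderiv ℝ f b‖ ≤ M * ‖x - b‖ :=
          hK.norm_image_sub_le_of_norm_fderiv_le (fun y hy => hdiff_fderiv y (hKs hy)) hM hb (hseg hx)
      _ ≤ M * ‖a - b‖ := mul_le_mul_of_nonneg_left (norm_sub_le_of_mem_segment hx) hM₀
  calc ‖f a - f b - fderiv ℝ f b (a - b)‖ ≤ M * ‖a - b‖ * ‖a - b‖ :=
        (convex_segment b a).norm_image_sub_le_of_norm_fderiv_le'
          (fun x hx => hdiff x (hKs (hseg hx))) hbound (left_mem_segment ℝ b a)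
          (right_mem_segment ℝ b a)
    _ = M * ‖a - b‖ ^ 2 := by ring

theorem IsCompact.exists_norm_sub_sub_fderiv_le (hs : IsOpen s) (hf : ContDiffOn ℝ 2 f s)
    (hKc : IsCompact K) (hK : Convex ℝ K) (hKs : K ⊆ s) :
    ∃ M, ∀ a ∈ K, ∀ b ∈ K, ‖f a - f b - fderiv ℝ f b (a - b)‖ ≤ M * ‖a - b‖ ^ 2 := by
  have hcont : ContinuousOn (fderiv ℝ (fderiv ℝ f)) s :=
    (hf.fderiv_of_isOpen hs (by norm_num : (1 : WithTop ℕ∞) + 1 ≤ 2)).continuousOn_fderiv_of_isOpen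
      hs le_rfl
  obtain ⟨M, hM⟩ := hKc.exists_bound_of_continuousOn (f := fderiv ℝ (fderiv ℝ f)) (hcont.mono hKs)
  exact ⟨M, fun a ha b hb =>
    hK.norm_sub_sub_fderiv_le_of_norm_fderiv_fderiv_le hs hf hKs hM ha hb⟩

end Taylor

section Symmetric

variable {ι F : Type*} [Fintype ι] [NormedAddCommGroup F] [NormedSpace ℝ F]
  {f : (ι → ℝ) → F}

theorem fderiv_const_apply_comp_perm (hsym : ∀ (π : Equiv.Perm ι) (a : ι → ℝ), f (a ∘ π) = f a)
    (x : ℝ) (π : Equiv.Perm ι) (v : ι → ℝ) :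
    fderiv ℝ f (fun _ => x) (v ∘ π) = fderiv ℝ f (fun _ => x) v := by
  let P : (ι → ℝ) ≃L[ℝ] (ι → ℝ) := (LinearEquiv.funCongrLeft ℝ ℝ π).toContinuousLinearEquiv
  have hfP : f ∘ P = f := funext (hsym π)
  have h := P.comp_right_fderiv (f := f) (x := fun _ => x)
  rw [hfP] at h
  exact (congrArg (· v) h).symm

theorem fderiv_const_apply_eq_zero_of_sum_eq_zero
    (hsym : ∀ (π : Equiv.Perm ι) (a : ι → ℝ), f (a ∘ π) = f a) (x : ℝ) {v : ι → ℝ}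
    (hv : ∑ i, v i = 0) : fderiv ℝ f (fun _ => x) v = 0 := by
  classical
  set L := fderiv ℝ f (fun _ => x)
  rcases isEmpty_or_nonempty ι with hι | ⟨⟨i₀⟩⟩
  · rw [Subsingleton.elim v 0, map_zero]
  have hsingle : ∀ i t, L (Pi.single i t) = L (Pi.single i₀ t) := fun i t => by
    rw [← fderiv_const_apply_comp_perm hsym x (Equiv.swap i₀ i), Pi.single_comp_equiv,
      Equiv.symm_swap, Equiv.swap_apply_right]
  calc L v = ∑ i, L (Pi.single i (v i)) := by rw [← map_sum, univ_sum_single]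
    _ = L (Pi.single i₀ (∑ i, v i)) := by
        simp only [hsingle, ← map_sum]
        exact congrArg L (map_sum (AddMonoidHom.single (fun _ => ℝ) i₀) v univ).symm
    _ = 0 := by rw [hv, Pi.single_zero, map_zero]

end Symmetric

section SumSq

variable {ι : Type*} [Fintype ι]

theorem sum_sub_mean_eq_zero (a : ι → ℝ) : ∑ i, (a i - (∑ j, a j) / Fintype.card ι) = 0 := by
  rcases isEmpty_or_nonempty ι with _ | _
  · simp
  rw [sum_sub_distrib, sum_const, card_univ, nsmul_eq_mul,
    mul_div_cancel₀ _ (Nat.cast_ne_zero.2 Fintype.card_ne_zero), sub_self]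

theorem sum_sq_sub_eq_of_sum_sub_eq_zero {a : ι → ℝ} {m : ℝ} (hm : ∑ i, (a i - m) = 0) (c : ℝ) :
    ∑ i, (a i - c) ^ 2 = ∑ i, (a i - m) ^ 2 + ∑ _i : ι, (m - c) ^ 2 := by
  have hcross : ∑ i, 2 * (a i - m) * (m - c) = 0 := by
    rw [← sum_mul, ← mul_sum, hm, mul_zero, zero_mul]
  rw [← sum_add_distrib, ← sub_eq_zero, ← sum_sub_distrib, ← hcross]
  exact sum_congr rfl fun i _ => by ring

theorem norm_sq_le_sum_sq (v : ι → ℝ) : ‖v‖ ^ 2 ≤ ∑ i, v i ^ 2 := by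
  have hle : ‖v‖ ≤ √(∑ i, v i ^ 2) := (pi_norm_le_iff_of_nonneg (Real.sqrt_nonneg _)).2 fun i =>
    Real.abs_le_sqrt (single_le_sum (fun j _ => sq_nonneg (v j)) (mem_univ i))
  calc ‖v‖ ^ 2 ≤ √(∑ i, v i ^ 2) ^ 2 := pow_le_pow_left₀ (norm_nonneg v) hle 2
    _ = ∑ i, v i ^ 2 := Real.sq_sqrt (sum_nonneg fun i _ => sq_nonneg (v i))

theorem setOf_sum_sq_sub_le_eq_preimage_closedBall (c R : ℝ) :
    {a : ι → ℝ | ∑ i, (a i - c) ^ 2 ≤ R ^ 2} =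
      WithLp.toLp 2 ⁻¹' Metric.closedBall (WithLp.toLp 2 fun _ => c) |R| := by
  ext a
  simp [EuclideanSpace.dist_eq, Real.sqrt_le_left (abs_nonneg R), sq_abs, Real.dist_eq]

theorem isCompact_setOf_sum_sq_sub_le (c R : ℝ) :
    IsCompact {a : ι → ℝ | ∑ i, (a i - c) ^ 2 ≤ R ^ 2} := by
  rw [setOf_sum_sq_sub_le_eq_preimage_closedBall]
  exact (PiLp.continuousLinearEquiv 2 ℝ fun _ : ι => ℝ).symm.toHomeomorph.isCompact_preimage.2
    (isCompact_closedBall _ _)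

theorem convex_setOf_sum_sq_sub_le (c R : ℝ) :
    Convex ℝ {a : ι → ℝ | ∑ i, (a i - c) ^ 2 ≤ R ^ 2} := by
  rw [setOf_sum_sq_sub_le_eq_preimage_closedBall]
  exact (convex_closedBall _ _).linear_preimage (WithLp.linearEquiv 2 ℝ (ι → ℝ)).symm.toLinearMap

end SumSq

theorem stmt_8_general (n : ℕ) (c R : ℝ)
    (r : Fin n → (Fin n → ℝ) → ℝ) (ε₁ : ℝ)
    (f : (Fin n → ℝ) → ℝ) (s : Set (Fin n → ℝ)) (hs : IsOpen s)
    (hball : {a : Fin n → ℝ | ∑ j, (a j - c) ^ 2 ≤ R ^ 2} ⊆ s)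
    (hsym : ∀ (π : Equiv.Perm (Fin n)) (a : Fin n → ℝ), f (a ∘ π) = f a)
    (hf : ContDiffOn ℝ 2 f s)
    (hclose : ∀ (j : Fin n) (a : Fin n → ℝ), ∑ i, (a i - c) ^ 2 ≤ R ^ 2 →
      |r j a - f a| ≤ ε₁) :
    ∃ δ > 0, ∀ (j : Fin n) (a : Fin n → ℝ), ∑ i, (a i - c) ^ 2 ≤ R ^ 2 →
      |r j a - f (fun _ => (∑ i, a i) / n)| ≤
        ε₁ + δ * ∑ i, (a i - (∑ i', a i') / n) ^ 2 := by
  obtain ⟨M, hM⟩ := (isCompact_setOf_sum_sq_sub_le c R).exists_norm_sub_sub_fderiv_le hs hf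
    (convex_setOf_sum_sq_sub_le c R) hball
  refine ⟨max M 1, lt_max_of_lt_right one_pos, fun j a ha => ?_⟩
  set m := (∑ i, a i) / (n : ℝ)
  have hmean : ∑ i, (a i - m) = 0 := by simpa using sum_sub_mean_eq_zero a
  have hm : ∑ _i : Fin n, (m - c) ^ 2 ≤ R ^ 2 := by
    have := sum_sq_sub_eq_of_sum_sub_eq_zero hmean c
    linarith [sum_nonneg fun i (_ : i ∈ univ) => sq_nonneg (a i - m)]
  have hgrad : fderiv ℝ f (fun _ => m) (a - fun _ => m) = 0 :=
    fderiv_const_apply_eq_zero_of_sum_eq_zero hsym m hmean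
  have htaylor := hM a ha _ hm
  rw [hgrad, sub_zero, Real.norm_eq_abs] at htaylor
  calc |r j a - f (fun _ => m)| ≤ |r j a - f a| + |f a - f (fun _ => m)| := abs_sub_le _ _ _
    _ ≤ ε₁ + M * ‖a - fun _ => m‖ ^ 2 := add_le_add (hclose j a ha) htaylor
    _ ≤ ε₁ + max M 1 * ∑ i, (a i - m) ^ 2 := by
        gcongr
        · exact le_max_left M 1
        · exact norm_sq_le_sum_sq (a - fun _ => m)

/-- Near-indistinguishable games. If payoffs `r_j` are uniformly
`ε₁`-close on the closed Euclidean ball `B̄(c^⊗n, R)` to an indistinguishable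
function `f` that is C² on an open set containing that ball, then there is
`δ > 0` such that for every `j` and every `a` in the ball,
`|r_j(a) − r̄(m̄)| ≤ ε₁ + δ · ‖a − m̄^⊗n‖²`. -/
theorem stmt_8 (n : ℕ) (hn : 2 ≤ n) (c R : ℝ) (hR : 0 < R)
    (r : Fin n → (Fin n → ℝ) → ℝ) (ε₁ : ℝ) (hε₁ : 0 ≤ ε₁)
    (f : (Fin n → ℝ) → ℝ) (s : Set (Fin n → ℝ)) (hs : IsOpen s)
    (hball : {a : Fin n → ℝ | ∑ j, (a j - c) ^ 2 ≤ R ^ 2} ⊆ s)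
    (hsym : ∀ (π : Equiv.Perm (Fin n)) (a : Fin n → ℝ), f (a ∘ π) = f a)
    (hf : ContDiffOn ℝ 2 f s)
    (hclose : ∀ (j : Fin n) (a : Fin n → ℝ), ∑ i, (a i - c) ^ 2 ≤ R ^ 2 →
      |r j a - f a| ≤ ε₁) :
    ∃ δ > 0, ∀ (j : Fin n) (a : Fin n → ℝ), ∑ i, (a i - c) ^ 2 ≤ R ^ 2 →
      |r j a - f (fun _ => (∑ i, a i) / n)| ≤
        ε₁ + δ * ∑ i, (a i - (∑ i', a i') / n) ^ 2 :=
  stmt_8_general n c R r ε₁ f s hs hball hsym hf hclose
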